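/- Let k ≥ 2 be an integer, set u = (⌈3k/2⌉ + 1)·k², let a ≥ u, and let S = {a} ∪ {a + i² : 1 ≤ i ≤ k}. Then max over 0 ≤ r ≤ a−1 of N_r equals max over a − k² ≤ r ≤ a−1 of N_r. -/

import Mathlib

/-!
Every element of the monoid is `c * a` plus a sum of at most `c` squares `i ^ 2 ≤ k ^ 2`.
Adding a suitable multiple `t * k ^ 2` moves any residue `r < a` into the window
`[a - k ^ 2, a)` without decreasing `N`: in the minimal element `n ≡ r + t * k ^ 2` either the
generator `a + k ^ 2` occurs at least `t` times, and deleting `t` of them leaves an element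
`≡ r` below `n`; or it occurs fewer times, and then, since `r + t * k ^ 2 ≥ a - k ^ 2` is large,
`n` needs at least `r / k ^ 2 + 4` generators, so `n` dominates
`(r / k ^ 2) * (a + k ^ 2) + Σ (a + x_j ^ 2)`, where `r % k ^ 2 = x_1² + ⋯ + x_4²` (Lagrange).
-/

/-- `Nr S a r` is the least element of the additive submonoid of `ℕ` generated by `S`
that is congruent to `r` modulo `a`. -/
noncomputable def Nr (S : Set ℕ) (a r : ℕ) : ℕ :=
  sInf {n : ℕ | n ∈ AddSubmonoid.closure S ∧ n % a = r}

lemma Nr_le {S : Set ℕ} {a r n : ℕ} (hn : n ∈ AddSubmonoid.closure S) (hr : n % a = r) :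
    Nr S a r ≤ n :=
  Nat.sInf_le ⟨hn, hr⟩

lemma Nr_mem {S : Set ℕ} {a r n : ℕ} (hn : n ∈ AddSubmonoid.closure S) (hr : n % a = r) :
    Nr S a r ∈ AddSubmonoid.closure S ∧ Nr S a r % a = r :=
  Nat.sInf_mem (⟨n, hn, hr⟩ : {m | m ∈ AddSubmonoid.closure S ∧ m % a = r}.Nonempty)

lemma exists_mul_le_le_mul_of_mem_closure {S : Set ℕ} {a b n : ℕ} (hS : S ⊆ Set.Icc a b)
    (hn : n ∈ AddSubmonoid.closure S) : ∃ u, u * a ≤ n ∧ n ≤ u * b := by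
  induction hn using AddSubmonoid.closure_induction with
  | mem x hx => exact ⟨1, by simpa using (hS hx).1, by simpa using (hS hx).2⟩
  | zero => exact ⟨0, by simp, by simp⟩
  | add x y _ _ ihx ihy =>
    obtain ⟨u, hux, hxu⟩ := ihx
    obtain ⟨v, hvy, hyv⟩ := ihy
    exact ⟨u + v, by rw [add_mul]; omega, by rw [add_mul]; omega⟩

def shiftedSquares (a k : ℕ) : Set ℕ := {n | ∃ i ≤ k, n = a + i ^ 2}

lemma union_eq_shiftedSquares (a k : ℕ) :
    ({a} : Set ℕ) ∪ {n : ℕ | ∃ i : ℕ, 1 ≤ i ∧ i ≤ k ∧ n = a + i ^ 2} = shiftedSquares a k := by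
  ext n
  constructor
  · rintro (rfl | ⟨i, -, hi, rfl⟩)
    exacts [⟨0, Nat.zero_le k, by simp⟩, ⟨i, hi, rfl⟩]
  · rintro ⟨i, hi, rfl⟩
    rcases Nat.eq_zero_or_pos i with rfl | hi0
    exacts [Or.inl (by simp), Or.inr ⟨i, hi0, hi, rfl⟩]

lemma shiftedSquares_mono (a : ℕ) {j k : ℕ} (h : j ≤ k) :
    shiftedSquares a j ⊆ shiftedSquares a k :=
  fun _ ⟨i, hi, hn⟩ => ⟨i, hi.trans h, hn⟩

lemma shiftedSquares_subset_Icc (a k : ℕ) : shiftedSquares a k ⊆ Set.Icc a (a + k ^ 2) := by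
  rintro _ ⟨i, hi, rfl⟩
  exact ⟨Nat.le_add_right a _, Nat.add_le_add_left (Nat.pow_le_pow_left hi 2) a⟩

lemma add_sq_mem_closure_shiftedSquares (a : ℕ) {i k : ℕ} (hi : i ≤ k) :
    a + i ^ 2 ∈ AddSubmonoid.closure (shiftedSquares a k) :=
  AddSubmonoid.subset_closure ⟨i, hi, rfl⟩

lemma exists_eq_mul_add_of_mem_closure_shiftedSquares {a k n : ℕ}
    (hn : n ∈ AddSubmonoid.closure (shiftedSquares a k)) :
    ∃ p m, n = p * (a + k ^ 2) + m ∧ m ∈ AddSubmonoid.closure (shiftedSquares a (k - 1)) := by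
  have hsub : shiftedSquares a k ⊆ {a + k ^ 2} ∪ shiftedSquares a (k - 1) := by
    rintro _ ⟨i, hi, rfl⟩
    rcases hi.eq_or_lt with rfl | hi
    · exact Or.inl rfl
    · exact Or.inr ⟨i, by omega, rfl⟩
  have hn' := AddSubmonoid.closure_mono hsub hn
  rw [AddSubmonoid.closure_union] at hn'
  obtain ⟨y, hy, m, hm, rfl⟩ := AddSubmonoid.mem_sup.1 hn'
  obtain ⟨p, rfl⟩ := AddSubmonoid.mem_closure_singleton.1 hy
  exact ⟨p, m, by rw [smul_eq_mul], hm⟩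

lemma div_add_four_mul_add_mem_closure_shiftedSquares {k : ℕ} (hk : 1 ≤ k) (a r : ℕ) :
    (r / k ^ 2 + 4) * a + r ∈ AddSubmonoid.closure (shiftedSquares a k) := by
  obtain ⟨x₁, x₂, x₃, x₄, hx⟩ := Nat.sum_four_squares (r % k ^ 2)
  have hlt : r % k ^ 2 < k ^ 2 := Nat.mod_lt _ (by positivity)
  have hmem : ∀ x, x ^ 2 ≤ r % k ^ 2 → a + x ^ 2 ∈ AddSubmonoid.closure (shiftedSquares a k) :=
    fun x hx => add_sq_mem_closure_shiftedSquares a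
      ((Nat.pow_lt_pow_iff_left two_ne_zero).1 (hx.trans_lt hlt)).le
  have heq : (r / k ^ 2 + 4) * a + r = (r / k ^ 2) • (a + k ^ 2) +
      ((a + x₁ ^ 2) + (a + x₂ ^ 2) + (a + x₃ ^ 2) + (a + x₄ ^ 2)) := by
    have := Nat.div_add_mod r (k ^ 2)
    rw [smul_eq_mul]
    linarith
  rw [heq]
  refine add_mem (nsmul_mem (add_sq_mem_closure_shiftedSquares a le_rfl) _) ?_
  refine add_mem (add_mem (add_mem (hmem _ ?_) (hmem _ ?_)) (hmem _ ?_)) (hmem _ ?_) <;> omega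

lemma add_four_le_of_mul_sq_le {k p q t u : ℕ} (hk : 1 ≤ k) (hpt : p < t)
    (h3k : 3 * k ≤ 2 * (q + t)) (h : (q + t) * k ^ 2 ≤ p * k ^ 2 + u * (k - 1) ^ 2) :
    q + 4 ≤ p + u := by
  -- `u ≤ q + 3 - p` generators cannot carry `(q + t - p) * k ^ 2`: immediate for `t ≥ 3`,
  -- and for `t ≤ 2` because `q ≥ 3 * k / 2 - 2` is large
  by_contra! hlt
  obtain ⟨j, rfl⟩ : ∃ j, k = j + 1 := ⟨k - 1, by omega⟩
  simp only [add_tsub_cancel_right] at h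
  rcases lt_or_ge t 3 with ht | ht
  · interval_cases t <;> nlinarith
  · nlinarith

lemma Nr_shiftedSquares_le_of_le_count {a k r t p m : ℕ} (hr : r < a) (htp : t ≤ p)
    (hm : m ∈ AddSubmonoid.closure (shiftedSquares a k))
    (hn : p * (a + k ^ 2) + m ≡ r + t * k ^ 2 [MOD a]) :
    Nr (shiftedSquares a k) a r ≤ p * (a + k ^ 2) + m := by
  obtain ⟨v, rfl⟩ : ∃ v, p = t + v := ⟨p - t, by omega⟩
  have hw : v * (a + k ^ 2) + m ∈ AddSubmonoid.closure (shiftedSquares a k) :=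
    add_mem (nsmul_mem (add_sq_mem_closure_shiftedSquares a le_rfl) _) hm
  have hwr : v * (a + k ^ 2) + m ≡ r [MOD a] := by
    refine Nat.ModEq.add_right_cancel' (t * k ^ 2) (Nat.ModEq.trans ?_ hn)
    rw [Nat.ModEq, ← Nat.add_mul_mod_self_right _ t a]
    ring_nf
  refine (Nr_le hw (Eq.trans hwr (Nat.mod_eq_of_lt hr))).trans ?_
  gcongr
  exact Nat.le_add_left v t

lemma Nr_shiftedSquares_le_of_count_lt {a k r t p m : ℕ} (hk : 1 ≤ k) (hr : r + t * k ^ 2 < a)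
    (h3k : 3 * k ≤ 2 * (r / k ^ 2 + t)) (hpt : p < t)
    (hm : m ∈ AddSubmonoid.closure (shiftedSquares a (k - 1)))
    (hn : (p * (a + k ^ 2) + m) % a = r + t * k ^ 2) :
    Nr (shiftedSquares a k) a r ≤ p * (a + k ^ 2) + m := by
  obtain ⟨u, hum, hmu⟩ :=
    exists_mul_le_le_mul_of_mem_closure (shiftedSquares_subset_Icc a (k - 1)) hm
  have hR : (p * k ^ 2 + (m - u * a)) % a = r + t * k ^ 2 := by
    rw [← hn, ← Nat.add_mul_mod_self_right _ (p + u)]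
    congr 1
    zify [hum]
    ring
  have hcount : r / k ^ 2 + 4 ≤ p + u := by
    refine add_four_le_of_mul_sq_le hk hpt h3k ?_
    calc (r / k ^ 2 + t) * k ^ 2 ≤ r + t * k ^ 2 := by
          rw [add_mul]; gcongr; exact Nat.div_mul_le_self r (k ^ 2)
      _ ≤ p * k ^ 2 + (m - u * a) := hR ▸ Nat.mod_le _ _
      _ ≤ p * k ^ 2 + u * (k - 1) ^ 2 := by
          gcongr; rw [Nat.sub_le_iff_le_add', ← mul_add]; exact hmu
  refine (Nr_le (div_add_four_mul_add_mem_closure_shiftedSquares hk a r) ?_).trans ?_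
  · rw [add_comm, Nat.add_mul_mod_self_right, Nat.mod_eq_of_lt (by omega)]
  · calc (r / k ^ 2 + 4) * a + r ≤ (p + u) * a + (p * k ^ 2 + (m - u * a)) := by
          gcongr; exact le_trans (by omega) (hR ▸ Nat.mod_le _ _)
      _ = p * (a + k ^ 2) + m := by zify [hum]; ring

lemma Nr_shiftedSquares_le_Nr_add {a k r t : ℕ} (hk : 1 ≤ k) (hr : r + t * k ^ 2 < a)
    (h3k : 3 * k ≤ 2 * ((r + t * k ^ 2) / k ^ 2)) :
    Nr (shiftedSquares a k) a r ≤ Nr (shiftedSquares a k) a (r + t * k ^ 2) := by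
  obtain ⟨hn, hnr⟩ :=
    Nr_mem (div_add_four_mul_add_mem_closure_shiftedSquares hk a (r + t * k ^ 2))
    (by rw [add_comm, Nat.add_mul_mod_self_right, Nat.mod_eq_of_lt hr])
  generalize Nr (shiftedSquares a k) a (r + t * k ^ 2) = n at hn hnr ⊢
  obtain ⟨p, m, rfl, hm⟩ := exists_eq_mul_add_of_mem_closure_shiftedSquares hn
  rcases le_or_gt t p with htp | hpt
  · exact Nr_shiftedSquares_le_of_le_count (by omega) htp
      (AddSubmonoid.closure_mono (shiftedSquares_mono a (Nat.sub_le k 1)) hm)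
      (hnr.trans (Nat.mod_eq_of_lt hr).symm)
  · rw [Nat.add_mul_div_right _ _ (by positivity)] at h3k
    exact Nr_shiftedSquares_le_of_count_lt hk hr h3k hpt hm hnr

lemma exists_add_mul_mem_Icc {a d r : ℕ} (hd : 0 < d) (hr : r < a) :
    ∃ t, r + t * d ∈ Finset.Icc (a - d) (a - 1) := by
  refine ⟨(a - 1 - r) / d, Finset.mem_Icc.2 ⟨?_, ?_⟩⟩
  · have := Nat.lt_div_mul_add (a := a - 1 - r) hd
    omega
  · have := Nat.div_mul_le_self (a - 1 - r) d
    omega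

lemma three_mul_le_two_mul_div_sq {a k r : ℕ} (hk : 1 ≤ k)
    (ha : ((3 * k + 1) / 2 + 1) * k ^ 2 ≤ a) (hr : a - k ^ 2 ≤ r) : 3 * k ≤ 2 * (r / k ^ 2) := by
  have hk2 : 0 < k ^ 2 := by positivity
  have hlt : ((3 * k + 1) / 2 + 1) * k ^ 2 < (r / k ^ 2 + 2) * k ^ 2 := by
    have := Nat.lt_div_mul_add (a := r) hk2
    have : (r / k ^ 2 + 2) * k ^ 2 = r / k ^ 2 * k ^ 2 + k ^ 2 + k ^ 2 := by ring
    omega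
  have := Nat.lt_of_mul_lt_mul_right hlt
  omega

theorem stmt15 (k : ℕ) (hk : 2 ≤ k) (a : ℕ) (ha : ((3 * k + 1) / 2 + 1) * k ^ 2 ≤ a) :
    (Finset.range a).sup
        (fun r => Nr (({a} : Set ℕ) ∪ {n : ℕ | ∃ i : ℕ, 1 ≤ i ∧ i ≤ k ∧ n = a + i ^ 2}) a r)
      = (Finset.Icc (a - k ^ 2) (a - 1)).sup
        (fun r => Nr (({a} : Set ℕ) ∪ {n : ℕ | ∃ i : ℕ, 1 ≤ i ∧ i ≤ k ∧ n = a + i ^ 2}) a r) := by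
  rw [union_eq_shiftedSquares]
  have hk2 : 0 < k ^ 2 := pow_pos (by omega) 2
  have ha0 : 0 < a := lt_of_lt_of_le (Nat.mul_pos (Nat.succ_pos _) hk2) ha
  refine le_antisymm (Finset.sup_le fun r hr => ?_) (Finset.sup_mono fun r hr => ?_)
  · obtain ⟨t, ht⟩ := exists_add_mul_mem_Icc hk2 (Finset.mem_range.1 hr)
    have ht' := Finset.mem_Icc.1 ht
    exact (Nr_shiftedSquares_le_Nr_add (by omega) (by omega)
      (three_mul_le_two_mul_div_sq (by omega) ha ht'.1)).trans (Finset.le_sup ht)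
  · rw [Finset.mem_Icc] at hr
    exact Finset.mem_range.2 (by omega)
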